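/- Let $k : \mathcal{X} \times \mathcal{X} \to \mathbb{R}$ be a kernel whose gradient is $L$-Lipschitz: $\|\nabla_1 k(x,x') - \nabla_1 k(y,y')\| \leq L(\|x-y\| + \|x'-y'\|)$. Then for any $\mu, \mu', \nu, \nu' \in \mathcal{P}_2(\mathcal{X})$ and $z, z' \in \mathcal{X}$, the gradient of the witness function satisfies $\|\nabla f_{\mu,\nu}(z) - \nabla f_{\mu',\nu'}(z')\| \leq 2L(\|z - z'\| + W_2(\mu,\mu') + W_2(\nu,\nu'))$. -/

import Mathlib

open MeasureTheory

/-- 2-Wasserstein distance defined via couplings. -/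
noncomputable def W2 {d : ℕ} (μ ν : Measure (EuclideanSpace ℝ (Fin d))) : ℝ :=
  Real.sqrt (sInf { c : ℝ |
    ∃ π : Measure (EuclideanSpace ℝ (Fin d) × EuclideanSpace ℝ (Fin d)),
      π.map Prod.fst = μ ∧ π.map Prod.snd = ν ∧
      Integrable (fun p => ‖p.1 - p.2‖ ^ 2) π ∧
      c = ∫ p, ‖p.1 - p.2‖ ^ 2 ∂π })

section helpers
variable {d : ℕ}
local notation "X" => EuclideanSpace ℝ (Fin d)

lemma jensen_sq {α : Type*} [MeasurableSpace α] (π : Measure α) [IsProbabilityMeasure π]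
    (g : α → ℝ) (hg : ∀ a, 0 ≤ g a) (h1 : Integrable g π) (h2 : Integrable (fun a => g a ^ 2) π) :
    ∫ a, g a ∂π ≤ Real.sqrt (∫ a, g a ^ 2 ∂π) := by
  set m := ∫ a, g a ∂π with hm
  have hm0 : 0 ≤ m := integral_nonneg hg
  have hvar : 0 ≤ ∫ a, (g a - m) ^ 2 ∂π := integral_nonneg fun a => sq_nonneg _
  have hexp : ∫ a, (g a - m) ^ 2 ∂π = (∫ a, g a ^ 2 ∂π) - m ^ 2 := by
    have : (fun a => (g a - m) ^ 2) = fun a => (g a ^ 2 - (2 * m) * g a) + m ^ 2 := by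
      funext a; ring
    rw [this]
    have hA : Integrable (fun a => g a ^ 2 - 2 * m * g a) π := h2.sub (h1.const_mul _)
    rw [integral_add hA (integrable_const _), integral_sub h2 (h1.const_mul _),
      integral_const_mul, integral_const]
    simp [hm]; ring
  have hsq : m ^ 2 ≤ ∫ a, g a ^ 2 ∂π := by linarith [hvar, hexp.symm.le]
  calc m = Real.sqrt (m ^ 2) := by rw [Real.sqrt_sq hm0]
    _ ≤ Real.sqrt (∫ a, g a ^ 2 ∂π) := Real.sqrt_le_sqrt hsq

lemma key {L : ℝ} (hL : 0 < L)
    (gk : X → X → X)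
    (hLip : ∀ x x' y y', ‖gk x x' - gk y y'‖ ≤ L * (‖x - y‖ + ‖x' - y'‖))
    (μ μ' : Measure X) [IsProbabilityMeasure μ] [IsProbabilityMeasure μ']
    (hμ2 : MemLp (fun x : X => x) 2 μ) (hμ'2 : MemLp (fun x : X => x) 2 μ')
    (z z' : X) :
    ‖(∫ x, gk z x ∂μ) - ∫ x, gk z' x ∂μ'‖ ≤ L * (‖z - z'‖ + W2 μ μ') := by
  -- continuity of gk
  have hcont : Continuous (fun p : X × X => gk p.1 p.2) := by
    apply (LipschitzWith.of_dist_le_mul (K := Real.toNNReal (2 * L))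
      (f := fun p : X × X => gk p.1 p.2) ?_).continuous
    intro p q
    rw [dist_eq_norm]
    calc ‖gk p.1 p.2 - gk q.1 q.2‖ ≤ L * (‖p.1 - q.1‖ + ‖p.2 - q.2‖) := hLip _ _ _ _
      _ ≤ L * (dist p q + dist p q) := by
          apply mul_le_mul_of_nonneg_left _ hL.le
          gcongr
          · rw [← dist_eq_norm]; exact (le_max_left _ _).trans_eq Prod.dist_eq.symm
          · rw [← dist_eq_norm]; exact (le_max_right _ _).trans_eq Prod.dist_eq.symm
      _ = Real.toNNReal (2 * L) * dist p q := by
          rw [Real.coe_toNNReal _ (by positivity)]; ring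
  have hcz : ∀ w : X, Continuous (gk w) := fun w =>
    hcont.comp (continuous_const.prodMk continuous_id)
  -- integrability of gk w wrt a prob measure with finite 2nd moment
  have hgkint : ∀ (w : X) (ρ : Measure X) [IsProbabilityMeasure ρ],
      MemLp (fun x : X => x) 2 ρ → Integrable (gk w) ρ := by
    intro w ρ _ hρ2
    have hρ1 : Integrable (fun x : X => x) ρ := hρ2.integrable one_le_two
    apply Integrable.mono' ((integrable_const (‖gk w w‖ + L * ‖w‖)).add (hρ1.norm.const_mul L))
      (hcz w).aestronglyMeasurable
    filter_upwards with x
    calc ‖gk w x‖ = ‖gk w w + (gk w x - gk w w)‖ := by rw [add_sub_cancel]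
      _ ≤ ‖gk w w‖ + ‖gk w x - gk w w‖ := norm_add_le _ _
      _ ≤ ‖gk w w‖ + L * (‖w - w‖ + ‖x - w‖) := by gcongr; exact hLip _ _ _ _
      _ = ‖gk w w‖ + L * ‖x - w‖ := by rw [sub_self, norm_zero, zero_add]
      _ ≤ ‖gk w w‖ + L * (‖x‖ + ‖w‖) := by gcongr; exact norm_sub_le x w
      _ = ‖gk w w‖ + L * ‖w‖ + L * ‖x‖ := by ring
  -- the coupling set
  set S := { c : ℝ | ∃ π : Measure (X × X),
      π.map Prod.fst = μ ∧ π.map Prod.snd = μ' ∧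
      Integrable (fun p => ‖p.1 - p.2‖ ^ 2) π ∧
      c = ∫ p, ‖p.1 - p.2‖ ^ 2 ∂π } with hS
  have hconts : Continuous (fun p : X × X => ‖p.1 - p.2‖ ^ 2) := by fun_prop
  have hSnonempty : S.Nonempty := by
    have hmfst : (μ.prod μ').map Prod.fst = μ := by
      rw [Measure.map_fst_prod]; simp
    have hmsnd : (μ.prod μ').map Prod.snd = μ' := by
      rw [Measure.map_snd_prod]; simp
    refine ⟨∫ p, ‖p.1 - p.2‖ ^ 2 ∂(μ.prod μ'), μ.prod μ', hmfst, hmsnd, ?_, rfl⟩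
    · have hμsq : Integrable (fun x : X => ‖x‖ ^ 2) μ :=
        (memLp_two_iff_integrable_sq_norm hμ2.aestronglyMeasurable).mp hμ2
      have hμ'sq : Integrable (fun x : X => ‖x‖ ^ 2) μ' :=
        (memLp_two_iff_integrable_sq_norm hμ'2.aestronglyMeasurable).mp hμ'2
      have h1 : Integrable (fun p : X × X => ‖p.1‖ ^ 2) (μ.prod μ') := by
        have := (integrable_map_measure (g := fun x : X => ‖x‖ ^ 2)
          (f := (Prod.fst : X × X → X))
          (Continuous.aestronglyMeasurable (by fun_prop)) measurable_fst.aemeasurable).mp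
          (by rwa [hmfst])
        exact this
      have h2 : Integrable (fun p : X × X => ‖p.2‖ ^ 2) (μ.prod μ') := by
        have := (integrable_map_measure (g := fun x : X => ‖x‖ ^ 2)
          (f := (Prod.snd : X × X → X))
          (Continuous.aestronglyMeasurable (by fun_prop)) measurable_snd.aemeasurable).mp
          (by rwa [hmsnd])
        exact this
      apply Integrable.mono' (((h1.const_mul 2).add (h2.const_mul 2)))
        hconts.aestronglyMeasurable
      filter_upwards with p
      simp only [Pi.add_apply]
      rw [Real.norm_of_nonneg (by positivity)]
      have := norm_sub_le p.1 p.2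
      nlinarith [this, sq_nonneg (‖p.1‖ - ‖p.2‖), norm_nonneg p.1, norm_nonneg p.2,
        norm_nonneg (p.1 - p.2)]
  have hSpos : ∀ c ∈ S, 0 ≤ c := by
    rintro c ⟨π, -, -, -, rfl⟩
    exact integral_nonneg fun p => by positivity
  have hSbdd : BddBelow S := ⟨0, hSpos⟩
  -- main bound for each coupling
  have hbound : ∀ c ∈ S, ‖(∫ x, gk z x ∂μ) - ∫ x, gk z' x ∂μ'‖
      ≤ L * (‖z - z'‖ + Real.sqrt c) := by
    rintro c ⟨π, h1, h2, hcost, rfl⟩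
    have hπ : IsProbabilityMeasure π := by
      constructor
      have : π.map Prod.fst Set.univ = 1 := by rw [h1]; exact measure_univ
      rwa [Measure.map_apply measurable_fst MeasurableSet.univ, Set.preimage_univ] at this
    have hμi : Integrable (gk z) μ := hgkint z μ hμ2
    have hμ'i : Integrable (gk z') μ' := hgkint z' μ' hμ'2
    have hfst : Integrable (fun p : X × X => gk z p.1) π :=
      (integrable_map_measure (g := gk z) (f := (Prod.fst : X × X → X))
        (hcz z).aestronglyMeasurable measurable_fst.aemeasurable).mp
        (by rwa [h1])
    have hsnd : Integrable (fun p : X × X => gk z' p.2) π :=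
      (integrable_map_measure (g := gk z') (f := (Prod.snd : X × X → X))
        (hcz z').aestronglyMeasurable measurable_snd.aemeasurable).mp
        (by rwa [h2])
    have hnormint : Integrable (fun p : X × X => ‖p.1 - p.2‖) π := by
      apply Integrable.mono' ((integrable_const (1:ℝ)).add hcost)
        (Continuous.aestronglyMeasurable (by fun_prop))
      filter_upwards with p
      simp only [Pi.add_apply]
      rw [Real.norm_of_nonneg (norm_nonneg _)]
      nlinarith [norm_nonneg (p.1 - p.2), sq_nonneg (‖p.1 - p.2‖ - 1)]
    have e1 : ∫ x, gk z x ∂μ = ∫ p, gk z p.1 ∂π := by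
      rw [← h1, integral_map measurable_fst.aemeasurable (hcz z).aestronglyMeasurable]
    have e2 : ∫ x, gk z' x ∂μ' = ∫ p, gk z' p.2 ∂π := by
      rw [← h2, integral_map measurable_snd.aemeasurable (hcz z').aestronglyMeasurable]
    rw [e1, e2, ← integral_sub hfst hsnd]
    calc ‖∫ p, (gk z p.1 - gk z' p.2) ∂π‖ ≤ ∫ p, ‖gk z p.1 - gk z' p.2‖ ∂π :=
          norm_integral_le_integral_norm _
      _ ≤ ∫ p, L * (‖z - z'‖ + ‖p.1 - p.2‖) ∂π := by
          apply integral_mono (hfst.sub hsnd).norm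
            (((integrable_const (‖z - z'‖)).add hnormint).const_mul L)
          intro p; exact hLip _ _ _ _
      _ = L * (‖z - z'‖ + ∫ p, ‖p.1 - p.2‖ ∂π) := by
          rw [integral_const_mul, integral_add (integrable_const _) hnormint, integral_const]
          simp
      _ ≤ L * (‖z - z'‖ + Real.sqrt (∫ p, ‖p.1 - p.2‖ ^ 2 ∂π)) := by
          gcongr
          exact jensen_sq π _ (fun p => norm_nonneg _) hnormint hcost
  -- pass to the infimum
  rw [W2]
  by_cases ht : ‖(∫ x, gk z x ∂μ) - ∫ x, gk z' x ∂μ'‖ / L - ‖z - z'‖ ≤ 0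
  · have h0 : 0 ≤ Real.sqrt (sInf S) := Real.sqrt_nonneg _
    rw [sub_nonpos, div_le_iff₀ hL] at ht
    nlinarith [h0]
  · push_neg at ht
    set t := ‖(∫ x, gk z x ∂μ) - ∫ x, gk z' x ∂μ'‖ / L - ‖z - z'‖ with htdef
    have ht2 : t ^ 2 ≤ sInf S := by
      apply le_csInf hSnonempty
      intro c hc
      have hb := hbound c hc
      have htc : t ≤ Real.sqrt c := by
        rw [htdef, sub_le_iff_le_add, div_le_iff₀ hL]
        calc ‖(∫ x, gk z x ∂μ) - ∫ x, gk z' x ∂μ'‖ ≤ L * (‖z - z'‖ + Real.sqrt c) := hb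
          _ = (Real.sqrt c + ‖z - z'‖) * L := by ring
      calc t ^ 2 ≤ Real.sqrt c ^ 2 := by nlinarith [Real.sqrt_nonneg c]
        _ = c := Real.sq_sqrt (hSpos c hc)
    have : t ≤ Real.sqrt (sInf S) := by
      calc t = Real.sqrt (t ^ 2) := (Real.sqrt_sq ht.le).symm
        _ ≤ Real.sqrt (sInf S) := Real.sqrt_le_sqrt ht2
    rw [htdef, sub_le_iff_le_add, div_le_iff₀ hL] at this
    calc ‖(∫ x, gk z x ∂μ) - ∫ x, gk z' x ∂μ'‖ ≤ (Real.sqrt (sInf S) + ‖z - z'‖) * L := this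
      _ = L * (‖z - z'‖ + Real.sqrt (sInf S)) := by ring

end helpers


/-- Joint Lipschitz continuity of the witness function gradient. -/
theorem stmt10 {d : ℕ} (L : ℝ) (hL : 0 < L)
    (gk : EuclideanSpace ℝ (Fin d) → EuclideanSpace ℝ (Fin d) → EuclideanSpace ℝ (Fin d))
    (hLip : ∀ x x' y y', ‖gk x x' - gk y y'‖ ≤ L * (‖x - y‖ + ‖x' - y'‖))
    (μ μ' ν ν' : Measure (EuclideanSpace ℝ (Fin d)))
    [IsProbabilityMeasure μ] [IsProbabilityMeasure μ']
    [IsProbabilityMeasure ν] [IsProbabilityMeasure ν']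
    (hμ2 : MemLp (fun x : EuclideanSpace ℝ (Fin d) => x) 2 μ)
    (hμ'2 : MemLp (fun x : EuclideanSpace ℝ (Fin d) => x) 2 μ')
    (hν2 : MemLp (fun x : EuclideanSpace ℝ (Fin d) => x) 2 ν)
    (hν'2 : MemLp (fun x : EuclideanSpace ℝ (Fin d) => x) 2 ν')
    (z z' : EuclideanSpace ℝ (Fin d)) :
    ‖((∫ x, gk z x ∂μ) - ∫ x, gk z x ∂ν) - ((∫ x, gk z' x ∂μ') - ∫ x, gk z' x ∂ν')‖ ≤
      2 * L * (‖z - z'‖ + W2 μ μ' + W2 ν ν') := by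
  have h1 := key hL gk hLip μ μ' hμ2 hμ'2 z z'
  have h2 := key hL gk hLip ν ν' hν2 hν'2 z z'
  have hW1 : 0 ≤ W2 μ μ' := Real.sqrt_nonneg _
  have hW2 : 0 ≤ W2 ν ν' := Real.sqrt_nonneg _
  calc ‖((∫ x, gk z x ∂μ) - ∫ x, gk z x ∂ν) - ((∫ x, gk z' x ∂μ') - ∫ x, gk z' x ∂ν')‖
      = ‖((∫ x, gk z x ∂μ) - ∫ x, gk z' x ∂μ') - ((∫ x, gk z x ∂ν) - ∫ x, gk z' x ∂ν')‖ := by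
        congr 1; abel
    _ ≤ ‖(∫ x, gk z x ∂μ) - ∫ x, gk z' x ∂μ'‖ + ‖(∫ x, gk z x ∂ν) - ∫ x, gk z' x ∂ν'‖ :=
        norm_sub_le _ _
    _ ≤ L * (‖z - z'‖ + W2 μ μ') + L * (‖z - z'‖ + W2 ν ν') := add_le_add h1 h2
    _ ≤ 2 * L * (‖z - z'‖ + W2 μ μ' + W2 ν ν') := by nlinarith
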